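/- arXiv:2504.09545 — 3 statements merged into one kernel-verified Lean document; each statement's English description precedes it below -/
import Mathlib

section
/- For any infinite set A of positive integers, the quantity |d(A, n+1) − d(A, n)| is unbounded as n ranges over the positive integers; that is, for every K there exists a positive integer n with |d(A, n+1) − d(A, n)| ≥ K. -/
/-!
Choose `K + 2` nonzero elements of `A` and a prime `p ≡ 1` modulo their product (Dirichlet).
All chosen elements divide `p - 1`, while at most the two divisors `1` and `p` of `p` lie in `A`.
-/

noncomputable def countDiv (A : Set ℕ) (m : ℤ) : ℕ := {a ∈ A | (a : ℤ) ∣ m}.ncard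

lemma countDiv_prime_le_two (A : Set ℕ) {p : ℕ} (hp : p.Prime) : countDiv A p ≤ 2 := by
  have hsub : {a ∈ A | (a : ℤ) ∣ (p : ℤ)} ⊆ ({1, p} : Set ℕ) := fun a ⟨_, hdvd⟩ =>
    hp.eq_one_or_self_of_dvd a (Int.natCast_dvd_natCast.mp hdvd)
  calc countDiv A p ≤ ({1, p} : Set ℕ).ncard := Set.ncard_le_ncard hsub (Set.toFinite _)
    _ ≤ 2 := (Set.ncard_insert_le _ _).trans (by simp)

lemma card_le_countDiv {A : Set ℕ} {S : Finset ℕ} (hSA : ↑S ⊆ A) {m : ℤ} (hm : m ≠ 0)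
    (hdvd : ∀ a ∈ S, (a : ℤ) ∣ m) : S.card ≤ countDiv A m := by
  have hfin : {a ∈ A | (a : ℤ) ∣ m}.Finite := (Set.finite_Iic m.natAbs).subset
    fun a ⟨_, ha⟩ => Nat.le_of_dvd (Int.natAbs_pos.mpr hm) (Int.natCast_dvd.mp ha)
  rw [← Set.ncard_coe_finset]
  exact Set.ncard_le_ncard (fun a ha => ⟨hSA ha, hdvd a ha⟩) hfin

theorem sarkozy_problem25_general (A : Set ℕ) (hAinf : A.Infinite) :
    ∀ K : ℕ, ∃ n : ℕ, 0 < n ∧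
      (K : ℤ) ≤ |(countDiv A ((n : ℤ) + 1) : ℤ) - (countDiv A (n : ℤ) : ℤ)| := by
  intro K
  obtain ⟨S, hSA, hScard⟩ :=
    (hAinf.sdiff (Set.finite_singleton 0)).exists_subset_card_eq (K + 2)
  have hprod : ∏ a ∈ S, a ≠ 0 := Finset.prod_ne_zero_iff.mpr fun a ha => (hSA ha).2
  obtain ⟨p, hp, -, hmod⟩ := Nat.exists_prime_gt_modEq_one 0 hprod
  have hp2 := hp.two_le
  have hprod_dvd : ∏ a ∈ S, a ∣ p - 1 := (Nat.modEq_iff_dvd' hp.one_le).mp hmod.symm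
  have hlow : K + 2 ≤ countDiv A ((p - 1 : ℕ) : ℤ) := hScard ▸
    card_le_countDiv (hSA.trans Set.sdiff_subset) (by omega) fun a ha =>
      Int.natCast_dvd_natCast.mpr ((Finset.dvd_prod_of_mem id ha).trans hprod_dvd)
  have hup := countDiv_prime_le_two A hp
  refine ⟨p - 1, by omega, ?_⟩
  rw [show ((p - 1 : ℕ) : ℤ) + 1 = p by omega, abs_sub_comm]
  exact le_abs.mpr (Or.inl (by omega))

/-- Sárközy's Problem 25: for any infinite set `A` of positive integers,
`|d(A, n+1) − d(A, n)|` is unbounded over positive integers `n`. -/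
theorem sarkozy_problem25 (A : Set ℕ) (hApos : ∀ a ∈ A, 0 < a) (hAinf : A.Infinite) :
    ∀ K : ℕ, ∃ n : ℕ, 0 < n ∧
      (K : ℤ) ≤ |(countDiv A ((n : ℤ) + 1) : ℤ) - (countDiv A (n : ℤ) : ℤ)| :=
  sarkozy_problem25_general A hAinf
end

section
/- Let A = {4m : m a positive integer}. Then for every positive integer n, min over pairs 1 ≤ i ≠ j ≤ 3 of |d(A, n+i) − d(A, n+j)| equals 0; in particular this minimum is bounded as n → ∞. -/
/-! Every element of `A` is a multiple of `4`, so `d(A, m) = 0` whenever `4 ∤ m`; and at least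
two of any three consecutive integers are not multiples of `4`. -/

theorem countDiv_eq_zero_of_forall_dvd {A : Set ℕ} {d : ℕ} {m : ℤ} (hA : ∀ a ∈ A, d ∣ a)
    (hm : ¬ (d : ℤ) ∣ m) : countDiv A m = 0 := by
  have hempty : {a ∈ A | (a : ℤ) ∣ m} = ∅ := Set.eq_empty_of_forall_notMem fun a ⟨ha, hdvd⟩ ↦
    hm ((Int.natCast_dvd_natCast.2 (hA a ha)).trans hdvd)
  rw [countDiv, hempty, Set.ncard_empty]

theorem exists_two_of_three_not_four_dvd (n : ℤ) :
    ∃ i j : ℕ, 1 ≤ i ∧ i ≤ 3 ∧ 1 ≤ j ∧ j ≤ 3 ∧ i ≠ j ∧ ¬ 4 ∣ n + i ∧ ¬ 4 ∣ n + j := by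
  have : n % 4 = 0 ∨ n % 4 = 1 ∨ n % 4 = 2 ∨ n % 4 = 3 := by omega
  rcases this with h | h | h | h
  · exact ⟨1, 2, by omega⟩
  · exact ⟨1, 2, by omega⟩
  · exact ⟨1, 3, by omega⟩
  · exact ⟨2, 3, by omega⟩

/-- Chen's counterexample: for `A = {4m : m ≥ 1}` and every positive integer `n`,
the minimum over pairs `1 ≤ i ≠ j ≤ 3` of `|d(A, n+i) − d(A, n+j)|` equals `0`
(some pair gives difference `0`); in particular this minimum is bounded. -/
theorem chen_counterexample :
    ∀ n : ℕ, 0 < n → ∃ i j : ℕ, 1 ≤ i ∧ i ≤ 3 ∧ 1 ≤ j ∧ j ≤ 3 ∧ i ≠ j ∧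
      |(countDiv {x : ℕ | ∃ m : ℕ, 0 < m ∧ x = 4 * m} ((n : ℤ) + i) : ℤ) -
        (countDiv {x : ℕ | ∃ m : ℕ, 0 < m ∧ x = 4 * m} ((n : ℤ) + j) : ℤ)| = 0 := by
  intro n _
  have hA : ∀ a ∈ {x : ℕ | ∃ m : ℕ, 0 < m ∧ x = 4 * m}, 4 ∣ a := by
    rintro _ ⟨m, -, rfl⟩
    exact dvd_mul_right 4 m
  obtain ⟨i, j, hi₁, hi₃, hj₁, hj₃, hij, hi, hj⟩ := exists_two_of_three_not_four_dvd n
  refine ⟨i, j, hi₁, hi₃, hj₁, hj₃, hij, ?_⟩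
  rw [countDiv_eq_zero_of_forall_dvd hA hi, countDiv_eq_zero_of_forall_dvd hA hj]
  simp
end

section
/- Let b, c be integers with b ≠ 0 and b ∤ c, so that b = x·b₁ and c = x·c₁ with gcd(b₁, c₁) = 1 and b₁ > 1 (where x = gcd(b, c)). Let B > 1 be any integer divisible by b₁, and let A = {B^m : m a positive integer}. Then the function n ↦ d(A, bn+c) is bounded: there is a constant C such that d(A, bn+c) ≤ C for all integers n. -/
/-!
Write `b n + c = x (b₁ n + c₁)`. Since `b₁` is coprime to `b₁ n + c₁`, a power `B^m` dividing
`b n + c` forces `b₁^m ∣ x`, and `b₁ > 1` bounds such `m` by `|x|`, independently of `n`.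
-/

theorem Int.lt_natAbs_of_pow_dvd {k x : ℤ} (hk : 1 < k.natAbs) (hx : x ≠ 0) {m : ℕ}
    (h : k ^ m ∣ x) : m < x.natAbs :=
  calc m < 2 ^ m := Nat.lt_two_pow_self
    _ ≤ k.natAbs ^ m := Nat.pow_le_pow_left hk m
    _ = (k ^ m).natAbs := (Int.natAbs_pow k m).symm
    _ ≤ x.natAbs := Int.natAbs_le_of_dvd_ne_zero h hx

theorem IsCoprime.pow_dvd_of_pow_dvd_mul_mul_add {R : Type*} [CommRing R] {b c x : R}
    (hbc : IsCoprime b c) (n : R) {m : ℕ} (h : b ^ m ∣ x * (b * n + c)) : b ^ m ∣ x := by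
  have hcop : IsCoprime (b ^ m) (b * n + c) := by
    simpa only [add_comm, mul_comm] using (hbc.add_mul_left_right n).pow_left
  exact hcop.dvd_of_dvd_mul_right h

theorem countDiv_pow_le {B N : ℕ} {z : ℤ} (h : ∀ m, 0 < m → (B : ℤ) ^ m ∣ z → m < N) :
    countDiv {y : ℕ | ∃ m : ℕ, 0 < m ∧ y = B ^ m} z ≤ N := by
  have hsub : {a ∈ {y : ℕ | ∃ m : ℕ, 0 < m ∧ y = B ^ m} | (a : ℤ) ∣ z}
      ⊆ (fun m => B ^ m) '' ↑(Finset.range N) := by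
    rintro _ ⟨⟨m, hm, rfl⟩, hdvd⟩
    exact ⟨m, Finset.mem_range.mpr (h m hm (by exact_mod_cast hdvd)), rfl⟩
  calc countDiv _ z ≤ ((fun m => B ^ m) '' ↑(Finset.range N)).ncard :=
        Set.ncard_le_ncard hsub ((Finset.range N).finite_toSet.image _)
    _ ≤ (↑(Finset.range N) : Set ℕ).ncard := Set.ncard_image_le (Finset.range N).finite_toSet
    _ = N := by rw [Set.ncard_coe_finset, Finset.card_range]

theorem case3_necessity_key_general (b c x b₁ c₁ : ℤ) (hb : b ≠ 0)
    (hb' : b = x * b₁) (hc' : c = x * c₁)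
    (hcop : Int.gcd b₁ c₁ = 1) (hb₁ : 1 < b₁)
    (B : ℕ) (hdvd : b₁ ∣ (B : ℤ)) :
    ∃ C : ℕ, ∀ n : ℤ,
      countDiv {y : ℕ | ∃ m : ℕ, 0 < m ∧ y = B ^ m} (b * n + c) ≤ C := by
  have hx : x ≠ 0 := by rintro rfl; simp [hb'] at hb
  have hcop' : IsCoprime b₁ c₁ := Int.isCoprime_iff_gcd_eq_one.mpr hcop
  refine ⟨x.natAbs, fun n => countDiv_pow_le fun m _ hBm => ?_⟩
  have hfactor : b * n + c = x * (b₁ * n + c₁) := by rw [hb', hc']; ring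
  have hb₁m : b₁ ^ m ∣ x * (b₁ * n + c₁) :=
    hfactor ▸ (pow_dvd_pow_of_dvd hdvd m).trans hBm
  exact Int.lt_natAbs_of_pow_dvd (by omega) hx (hcop'.pow_dvd_of_pow_dvd_mul_mul_add n hb₁m)

/-- Key claim in the necessity argument of Case 3: if `b ≠ 0`, `b ∤ c`, `b = x·b₁`,
`c = x·c₁` with `x = gcd(b, c)`, `gcd(b₁, c₁) = 1` and `b₁ > 1`, and `B > 1` is an
integer divisible by `b₁`, then with `A = {B^m : m ≥ 1}` the function
`n ↦ d(A, bn+c)` is bounded. -/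
theorem case3_necessity_key (b c x b₁ c₁ : ℤ) (hb : b ≠ 0) (hbc : ¬ b ∣ c)
    (hx : x = Int.gcd b c) (hb' : b = x * b₁) (hc' : c = x * c₁)
    (hcop : Int.gcd b₁ c₁ = 1) (hb₁ : 1 < b₁)
    (B : ℕ) (hB : 1 < B) (hdvd : b₁ ∣ (B : ℤ)) :
    ∃ C : ℕ, ∀ n : ℤ,
      countDiv {y : ℕ | ∃ m : ℕ, 0 < m ∧ y = B ^ m} (b * n + c) ≤ C :=
  case3_necessity_key_general b c x b₁ c₁ hb hb' hc' hcop hb₁ B hdvd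
end
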